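/- Let q be a complex number with |q| = 1 and let (V₁,V₂) be a q-commutative pair of isometries on a complex Hilbert space H. Then, as subsets of H ⊕ H, one has the equalities { (D_{V₁*}V₂*h, D_{V₂*}h) : h ∈ H } = 𝒟_{V₁*} ⊕ 𝒟_{V₂*} = { (D_{V₁*}h, D_{V₂*}V₁*h) : h ∈ H }. -/
import Mathlib


open ContinuousLinearMap

theorem stmt_0 {H : Type*} [NormedAddCommGroup H] [InnerProductSpace ℂ H] [CompleteSpace H]
    (q : ℂ) (hq : ‖q‖ = 1) (V₁ V₂ : H →L[ℂ] H)
    (hV₁ : adjoint V₁ ∘L V₁ = 1) (hV₂ : adjoint V₂ ∘L V₂ = 1)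
    (hcomm : V₁ ∘L V₂ = q • (V₂ ∘L V₁)) :
    (Set.range (fun h : H =>
        ((1 - V₁ ∘L adjoint V₁) (adjoint V₂ h), (1 - V₂ ∘L adjoint V₂) h))
      = (Set.range ⇑(1 - V₁ ∘L adjoint V₁)) ×ˢ (Set.range ⇑(1 - V₂ ∘L adjoint V₂))) ∧
    (Set.range (fun h : H =>
        ((1 - V₁ ∘L adjoint V₁) h, (1 - V₂ ∘L adjoint V₂) (adjoint V₁ h)))
      = (Set.range ⇑(1 - V₁ ∘L adjoint V₁)) ×ˢ (Set.range ⇑(1 - V₂ ∘L adjoint V₂))) := by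
  have h1 : ∀ x : H, adjoint V₁ (V₁ x) = x := fun x => by
    have := DFunLike.congr_fun hV₁ x
    simpa using this
  have h2 : ∀ x : H, adjoint V₂ (V₂ x) = x := fun x => by
    have := DFunLike.congr_fun hV₂ x
    simpa using this
  constructor
  · ext ⟨a, b⟩
    constructor
    · rintro ⟨h, hh⟩
      simp only [Prod.mk.injEq] at hh
      exact ⟨⟨adjoint V₂ h, hh.1⟩, ⟨h, hh.2⟩⟩
    · rintro ⟨⟨x, rfl⟩, ⟨y, rfl⟩⟩
      refine ⟨(1 - V₂ ∘L adjoint V₂) y + V₂ x, ?_⟩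
      simp [sub_apply, comp_apply, one_apply, map_add, map_sub, h2, Prod.ext_iff]
  · ext ⟨a, b⟩
    constructor
    · rintro ⟨h, hh⟩
      simp only [Prod.mk.injEq] at hh
      exact ⟨⟨h, hh.1⟩, ⟨adjoint V₁ h, hh.2⟩⟩
    · rintro ⟨⟨x, rfl⟩, ⟨y, rfl⟩⟩
      refine ⟨(1 - V₁ ∘L adjoint V₁) x + V₁ y, ?_⟩
      simp [sub_apply, comp_apply, one_apply, map_add, map_sub, h1, Prod.ext_iff]
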